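/- Let Ω ⊂ ℝⁿ be a convex set and ρ a metric on Ω such that every Euclidean line segment in Ω is a geodesic of (Ω,ρ). Fix ε > 0 and set c_ε(x,y) := ρ(x,y) + ε|x−y|². Let Γ ⊂ Ω² be a c_ε-cyclically monotone set. If (x₁,y₁), (x₂,y₂) ∈ Γ with y₁ ≠ y₂ and t ∈ (0,1), then (1−t)x₁ + t y₁ ≠ (1−t)x₂ + t y₂. -/

import Mathlib

open MeasureTheory Set Metric Filter Topology ENNReal NNReal

noncomputable section

/-- `n`-dimensional Euclidean space. -/
abbrev Eucl (n : ℕ) := EuclideanSpace ℝ (Fin n)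

/-- `ρ` is a metric on the set `Ω`. -/
def IsMetricOn {n : ℕ} (Ω : Set (Eucl n)) (ρ : Eucl n → Eucl n → ℝ) : Prop :=
  (∀ x ∈ Ω, ∀ y ∈ Ω, 0 ≤ ρ x y) ∧
  (∀ x ∈ Ω, ∀ y ∈ Ω, (ρ x y = 0 ↔ x = y)) ∧
  (∀ x ∈ Ω, ∀ y ∈ Ω, ρ x y = ρ y x) ∧
  (∀ x ∈ Ω, ∀ y ∈ Ω, ∀ z ∈ Ω, ρ x z ≤ ρ x y + ρ y z)

/-- Every Euclidean line segment in `Ω` is a geodesic of `(Ω, ρ)`. -/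
def SegmentsAreGeodesics {n : ℕ} (Ω : Set (Eucl n)) (ρ : Eucl n → Eucl n → ℝ) : Prop :=
  ∀ x ∈ Ω, ∀ y ∈ Ω, ∀ s ∈ Icc (0:ℝ) 1, ∀ t ∈ Icc (0:ℝ) 1,
    ρ ((1-s) • x + s • y) ((1-t) • x + t • y) = |t - s| * ρ x y

/-- The ball of `(Ω, ρ)` centred at `x` with radius `r`. -/
def rhoBall {n : ℕ} (Ω : Set (Eucl n)) (ρ : Eucl n → Eucl n → ℝ) (x : Eucl n) (r : ℝ) :
    Set (Eucl n) :=
  {y ∈ Ω | ρ x y < r}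

/-- The Lebesgue measure is locally doubling on `(Ω, ρ)`. -/
def LocallyDoubling {n : ℕ} (Ω : Set (Eucl n)) (ρ : Eucl n → Eucl n → ℝ) : Prop :=
  ∀ R > 0, ∃ C : ℝ, 1 ≤ C ∧ ∀ x ∈ Ω, ∀ r : ℝ, 0 < r → r ≤ R →
    volume (rhoBall Ω ρ x (2*r)) ≤ ENNReal.ofReal C * volume (rhoBall Ω ρ x r)

/-- Assumption A of the paper: (i) the topology of `ρ` on `Ω` is the Euclidean one,
(ii) Euclidean segments are geodesics, (iii) Lebesgue measure is locally doubling. -/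
def AssumptionA {n : ℕ} (Ω : Set (Eucl n)) (ρ : Eucl n → Eucl n → ℝ) : Prop :=
  (∀ x ∈ Ω, ∀ ε > 0, ∃ δ > 0, ∀ y ∈ Ω, dist x y < δ → ρ x y < ε) ∧
  (∀ x ∈ Ω, ∀ ε > 0, ∃ δ > 0, ∀ y ∈ Ω, ρ x y < δ → dist x y < ε) ∧
  SegmentsAreGeodesics Ω ρ ∧
  LocallyDoubling Ω ρ

/-- A set `Γ` is `c`-cyclically monotone for a real-valued cost `c`. -/
def CyclicallyMonotoneR {α : Type*} (c : α → α → ℝ) (Γ : Set (α × α)) : Prop :=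
  ∀ (m : ℕ) (p : Fin (m+1) → α × α), (∀ i, p i ∈ Γ) →
    ∑ i, c (p i).1 (p i).2 ≤ ∑ i, c (p i).1 (p (i+1)).2

/-!
If the two interpolants met at a point `z`, the triangle inequality through `z` would make the
swapped pairing `(x₁, y₂), (x₂, y₁)` no more expensive than the original one for `ρ`, because
`z` lies on both segments, which are geodesics. For the quadratic part the swap is strictly
cheaper, by `2t/(1-t) |y₁ - y₂|²`. Together this contradicts cyclical monotonicity of `Γ` on
the two pairs.
-/

theorem CyclicallyMonotoneR.add_le_add_swap {α : Type*} {c : α → α → ℝ} {Γ : Set (α × α)}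
    (hΓ : CyclicallyMonotoneR c Γ) {x₁ y₁ x₂ y₂ : α} (h₁ : (x₁, y₁) ∈ Γ) (h₂ : (x₂, y₂) ∈ Γ) :
    c x₁ y₁ + c x₂ y₂ ≤ c x₁ y₂ + c x₂ y₁ := by
  have h := hΓ 1 ![(x₁, y₁), (x₂, y₂)] (by intro i; fin_cases i <;> assumption)
  simpa [Fin.sum_univ_two] using h

namespace SegmentsAreGeodesics

variable {n : ℕ} {Ω : Set (Eucl n)} {ρ : Eucl n → Eucl n → ℝ} {x y : Eucl n} {t : ℝ}

theorem rho_to_interp (hgeo : SegmentsAreGeodesics Ω ρ) (hx : x ∈ Ω) (hy : y ∈ Ω)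
    (ht : t ∈ Icc (0 : ℝ) 1) : ρ x ((1 - t) • x + t • y) = t * ρ x y := by
  simpa [abs_of_nonneg ht.1] using hgeo x hx y hy 0 ⟨le_rfl, zero_le_one⟩ t ht

theorem rho_from_interp (hgeo : SegmentsAreGeodesics Ω ρ) (hx : x ∈ Ω) (hy : y ∈ Ω)
    (ht : t ∈ Icc (0 : ℝ) 1) : ρ ((1 - t) • x + t • y) y = (1 - t) * ρ x y := by
  simpa [abs_of_nonneg (sub_nonneg.2 ht.2)] using
    hgeo x hx y hy t ht 1 ⟨zero_le_one, le_rfl⟩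

theorem rho_swap_le_of_interp_eq (hgeo : SegmentsAreGeodesics Ω ρ) (hconv : Convex ℝ Ω)
    (htri : ∀ x ∈ Ω, ∀ y ∈ Ω, ∀ z ∈ Ω, ρ x z ≤ ρ x y + ρ y z)
    {x₁ y₁ x₂ y₂ : Eucl n} (hx₁ : x₁ ∈ Ω) (hy₁ : y₁ ∈ Ω) (hx₂ : x₂ ∈ Ω) (hy₂ : y₂ ∈ Ω)
    (ht : t ∈ Icc (0 : ℝ) 1) (heq : (1 - t) • x₁ + t • y₁ = (1 - t) • x₂ + t • y₂) :
    ρ x₁ y₂ + ρ x₂ y₁ ≤ ρ x₁ y₁ + ρ x₂ y₂ := by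
  set z := (1 - t) • x₁ + t • y₁
  have hz : z ∈ Ω := hconv hx₁ hy₁ (sub_nonneg.2 ht.2) ht.1 (by ring)
  have via_z₁ := htri x₁ hx₁ z hz y₂ hy₂
  have via_z₂ := htri x₂ hx₂ z hz y₁ hy₁
  rw [hgeo.rho_to_interp hx₁ hy₁ ht, heq, hgeo.rho_from_interp hx₂ hy₂ ht] at via_z₁
  rw [hgeo.rho_from_interp hx₁ hy₁ ht, heq, hgeo.rho_to_interp hx₂ hy₂ ht] at via_z₂
  linarith

end SegmentsAreGeodesics

section InnerProductSpace

variable {E : Type*} [NormedAddCommGroup E] [InnerProductSpace ℝ E]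

theorem norm_sq_swap_of_interp_eq {x₁ y₁ x₂ y₂ : E} {t : ℝ}
    (heq : (1 - t) • x₁ + t • y₁ = (1 - t) • x₂ + t • y₂) :
    (1 - t) * (‖x₁ - y₂‖ ^ 2 + ‖x₂ - y₁‖ ^ 2) + 2 * t * ‖y₁ - y₂‖ ^ 2 =
      (1 - t) * (‖x₁ - y₁‖ ^ 2 + ‖x₂ - y₂‖ ^ 2) := by
  have hx : (1 - t) • (x₁ - x₂) = -(t • (y₁ - y₂)) := by
    linear_combination (norm := module) heq
  have hinner : (1 - t) * inner ℝ (x₁ - x₂) (y₁ - y₂) = -(t * ‖y₁ - y₂‖ ^ 2) := by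
    rw [← real_inner_smul_left, hx, inner_neg_left, real_inner_smul_left,
      real_inner_self_eq_norm_sq]
  have hcross₁ := norm_add_sq_real (x₁ - y₁) (y₁ - y₂)
  have hcross₂ := norm_sub_sq_real (x₂ - y₂) (y₁ - y₂)
  rw [show x₁ - y₁ + (y₁ - y₂) = x₁ - y₂ by abel] at hcross₁
  rw [show x₂ - y₂ - (y₁ - y₂) = x₂ - y₁ by abel] at hcross₂
  have hsplit : inner ℝ (x₁ - y₁) (y₁ - y₂) =
      inner ℝ (x₁ - x₂) (y₁ - y₂) + inner ℝ (x₂ - y₂) (y₁ - y₂) - ‖y₁ - y₂‖ ^ 2 := by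
    rw [show x₁ - y₁ = (x₁ - x₂) + (x₂ - y₂) - (y₁ - y₂) by abel, inner_sub_left,
      inner_add_left, real_inner_self_eq_norm_sq]
  linear_combination (1 - t) * hcross₁ + (1 - t) * hcross₂ + 2 * (1 - t) * hsplit + 2 * hinner

theorem norm_sq_swap_lt_of_interp_eq {x₁ y₁ x₂ y₂ : E} {t : ℝ} (ht0 : 0 < t) (ht1 : t < 1)
    (hy : y₁ ≠ y₂) (heq : (1 - t) • x₁ + t • y₁ = (1 - t) • x₂ + t • y₂) :
    ‖x₁ - y₂‖ ^ 2 + ‖x₂ - y₁‖ ^ 2 < ‖x₁ - y₁‖ ^ 2 + ‖x₂ - y₂‖ ^ 2 := by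
  have hd : 0 < ‖y₁ - y₂‖ := norm_pos_iff.2 (sub_ne_zero.2 hy)
  have hgain : 0 < 2 * t * ‖y₁ - y₂‖ ^ 2 := by positivity
  refine lt_of_mul_lt_mul_left ?_ (sub_pos.2 ht1).le
  linarith [norm_sq_swap_of_interp_eq heq]

end InnerProductSpace

/-- Let `Ω ⊆ ℝⁿ` be convex and `ρ` a metric on `Ω` for which Euclidean
segments are geodesics; let `c_ε(x,y) = ρ(x,y) + ε|x-y|²` with `ε > 0`.  If `Γ ⊆ Ω²` is
`c_ε`-cyclically monotone, `(x₁,y₁), (x₂,y₂) ∈ Γ` with `y₁ ≠ y₂` and `t ∈ (0,1)`, then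
`(1-t) x₁ + t y₁ ≠ (1-t) x₂ + t y₂`. -/
theorem interpolants_disjoint {n : ℕ} (Ω : Set (Eucl n)) (hconv : Convex ℝ Ω)
    (ρ : Eucl n → Eucl n → ℝ) (hmet : IsMetricOn Ω ρ) (hgeo : SegmentsAreGeodesics Ω ρ)
    (ε : ℝ) (hε : 0 < ε)
    (Γ : Set (Eucl n × Eucl n)) (hΓΩ : Γ ⊆ Ω ×ˢ Ω)
    (hΓmono : CyclicallyMonotoneR (fun x y => ρ x y + ε * ‖x - y‖^2) Γ)
    (x₁ y₁ x₂ y₂ : Eucl n) (h₁ : (x₁, y₁) ∈ Γ) (h₂ : (x₂, y₂) ∈ Γ) (hy : y₁ ≠ y₂)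
    (t : ℝ) (ht0 : 0 < t) (ht1 : t < 1) :
    (1-t) • x₁ + t • y₁ ≠ (1-t) • x₂ + t • y₂ := by
  intro heq
  obtain ⟨hx₁, hy₁⟩ := hΓΩ h₁
  obtain ⟨hx₂, hy₂⟩ := hΓΩ h₂
  have hmono := hΓmono.add_le_add_swap h₁ h₂
  have hrho := hgeo.rho_swap_le_of_interp_eq hconv hmet.2.2.2 hx₁ hy₁ hx₂ hy₂
    ⟨ht0.le, ht1.le⟩ heq
  have hquad := norm_sq_swap_lt_of_interp_eq ht0 ht1 hy heq
  nlinarith [mul_lt_mul_of_pos_left hquad hε]
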